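/- If w is a factor of x, then the numbers of occurrences of the letters 1 and 2 in w differ by at most 1, i.e., ||w|₁ − |w|₂| ≤ 1. Consequently, the letters 1 and 2 alternate in the word obtained from x by erasing all occurrences of 0. -/

import Mathlib

/-- The 2-kernel of a sequence `s : ℕ → ℤ`. -/
def kernel2 (s : ℕ → ℤ) : Set (ℕ → ℤ) :=
  {t | ∃ i j : ℕ, j < 2 ^ i ∧ t = fun n => s (2 ^ i * n + j)}

/-- A sequence is 2-regular if the ℤ-module spanned by its 2-kernel is finitely generated. -/
def IsTwoRegular (s : ℕ → ℤ) : Prop :=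
  (Submodule.span ℤ (kernel2 s)).FG

/-- A sequence is 2-automatic if its 2-kernel is finite. -/
def IsTwoAutomatic (s : ℕ → ℤ) : Prop :=
  (kernel2 s).Finite

/-- The period-doubling word, fixed point (starting with 0) of 0 ↦ 01, 1 ↦ 00:
its `n`-th letter is the parity of the 2-adic valuation of `n+1`. -/
def pd (n : ℕ) : ℕ := (n + 1).factorization 2 % 2

/-- The Thue–Morse word, fixed point (starting with 0) of 0 ↦ 01, 1 ↦ 10:
its `n`-th letter is the parity of the binary digit sum of `n`. -/
def tm (n : ℕ) : ℕ := (Nat.digits 2 n).sum % 2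

/-- The 2-block coding `x = block(p, 2)` of the period-doubling word. -/
def xw (n : ℕ) : ℕ := 2 * pd n + pd (n + 1)

/-- The 2-block coding `y = block(t, 2)` of the Thue–Morse word. -/
def yw (n : ℕ) : ℕ := 2 * tm n + tm (n + 1)

/-- The factor of an infinite word `w` of length `len` occurring at position `i`. -/
def factorAt (w : ℕ → ℕ) (i len : ℕ) : List ℕ :=
  (List.range len).map fun k => w (i + k)

/-- `u` is a factor of the infinite word `w`. -/
def IsFactor (w : ℕ → ℕ) (u : List ℕ) : Prop :=
  ∃ i, u = factorAt w i u.length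

/-- Maximal number of 0's in a factor of `x` of length `n`. -/
noncomputable def M0 (n : ℕ) : ℕ := sSup {k | ∃ i, (factorAt xw i n).count 0 = k}

/-- Minimal number of 0's in a factor of `x` of length `n`. -/
noncomputable def m0 (n : ℕ) : ℕ := sInf {k | ∃ i, (factorAt xw i n).count 0 = k}

noncomputable def D0 (n : ℕ) : ℕ := M0 n - m0 n

/-- Maximal number of 2's in a factor of `x` of length `n`. -/
noncomputable def M2c (n : ℕ) : ℕ := sSup {k | ∃ i, (factorAt xw i n).count 2 = k}

/-- Minimal number of 2's in a factor of `x` of length `n`. -/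
noncomputable def m2c (n : ℕ) : ℕ := sInf {k | ∃ i, (factorAt xw i n).count 2 = k}

/-- The max-jump function for `M0`. -/
noncomputable def JM0 : ℕ → ℕ
  | 0 => 0
  | n + 1 => if M0 n < M0 (n + 1) then 1 else 0

/-- The min-jump function for `m0`. -/
noncomputable def jm0 (n : ℕ) : ℕ := if m0 n < m0 (n + 1) then 1 else 0

/-- Maximal total number of 1's and 2's in a factor of `y` of length `n`. -/
noncomputable def M12 (n : ℕ) : ℕ :=
  sSup {k | ∃ i, (factorAt yw i n).count 1 + (factorAt yw i n).count 2 = k}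

/-- Minimal total number of 1's and 2's in a factor of `y` of length `n`. -/
noncomputable def m12 (n : ℕ) : ℕ :=
  sInf {k | ∃ i, (factorAt yw i n).count 1 + (factorAt yw i n).count 2 = k}

noncomputable def D12 (n : ℕ) : ℕ := M12 n - m12 n

/-- Maximal total number of 0's and 3's in a factor of `y` of length `n`. -/
noncomputable def M03 (n : ℕ) : ℕ :=
  sSup {k | ∃ i, (factorAt yw i n).count 0 + (factorAt yw i n).count 3 = k}

/-- Minimal total number of 0's and 3's in a factor of `y` of length `n`. -/
noncomputable def m03 (n : ℕ) : ℕ :=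
  sInf {k | ∃ i, (factorAt yw i n).count 0 + (factorAt yw i n).count 3 = k}

/-- The max-jump function for `M03`. -/
noncomputable def JM03 (n : ℕ) : ℕ := if M03 (n - 1) < M03 n then 1 else 0

/-- The min-jump function for `m03`. -/
noncomputable def jm03 (n : ℕ) : ℕ := if m03 n < m03 (n + 1) then 1 else 0

/-- Abelian complexity: the number of abelian equivalence classes (i.e. distinct
multisets of letters) of factors of `w` of length `n`. -/
noncomputable def abComplexity (w : ℕ → ℕ) (n : ℕ) : ℕ :=
  Set.ncard {m : Multiset ℕ | ∃ i, (↑(factorAt w i n) : Multiset ℕ) = m}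

/-- The number of occurrences of `v` as a factor of `u`. -/
def countFactor (u v : List ℕ) : ℕ :=
  ((List.range (u.length + 1 - v.length)).filter
    fun i => decide ((u.drop i).take v.length = v)).length

/-- 2-abelian complexity: the number of 2-abelian equivalence classes of factors of `w`
of length `n`, where two words are 2-abelian equivalent when every word of length at most 2
occurs equally often in both. -/
noncomputable def abel2Complexity (w : ℕ → ℕ) (n : ℕ) : ℕ :=
  Set.ncard {f : List ℕ → ℕ |
    ∃ i, f = fun v => if v.length ≤ 2 then countFactor (factorAt w i n) v else 0}

/-- The morphism φ : 0 ↦ 12, 1 ↦ 12, 2 ↦ 00. -/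
def phiL : ℕ → List ℕ
  | 0 => [1, 2]
  | 1 => [1, 2]
  | 2 => [0, 0]
  | _ => []

/-- The morphism τ : 0 ↦ 0, 1 ↦ 2, 2 ↦ 1. -/
def tauL : ℕ → ℕ
  | 1 => 2
  | 2 => 1
  | n => n

/-! Since `p(2k) = 0` and `p(2k+2) = 0`, the pair `x(2k) x(2k+1)` is `0 0` or `1 2`,
so `x` is a concatenation of the blocks `00` and `12`. Hence the balance `|u|₁ - |u|₂` of every
prefix `u` of `x` is `0` or `1`, and a factor, being a difference of two prefixes, has balance in
`{-1, 0, 1}`. Two equal nonzero letters separated only by `0`s would give a factor of balance `±2`. -/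

lemma factorAt_add (w : ℕ → ℕ) (i m n : ℕ) :
    factorAt w i (m + n) = factorAt w i m ++ factorAt w (i + m) n := by
  simp [factorAt, List.range_add, Nat.add_assoc]

lemma factorAt_one (w : ℕ → ℕ) (i : ℕ) : factorAt w i 1 = [w i] := rfl

lemma factorAt_two (w : ℕ → ℕ) (i : ℕ) : factorAt w i 2 = [w i, w (i + 1)] := rfl

def balance (u : List ℕ) : ℤ := u.count 1 - u.count 2

@[simp]
lemma balance_append (u v : List ℕ) : balance (u ++ v) = balance u + balance v := by
  simp only [balance, List.count_append]
  push_cast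
  ring

lemma balance_singleton (a : ℕ) :
    balance [a] = (if a = 1 then 1 else 0) - (if a = 2 then 1 else 0) := by
  simp only [balance, List.count_singleton, beq_iff_eq]
  split_ifs <;> simp

lemma balance_factorAt_of_forall_eq_zero {w : ℕ → ℕ} {i n : ℕ}
    (h : ∀ k < n, w (i + k) = 0) : balance (factorAt w i n) = 0 := by
  have hzero : ∀ a ∈ factorAt w i n, a = 0 := by
    simp only [factorAt, List.mem_map, List.mem_range]
    rintro a ⟨k, hk, rfl⟩
    exact h k hk
  have h1 : (factorAt w i n).count 1 = 0 :=
    List.count_eq_zero.2 fun h1 => by simpa using hzero 1 h1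
  have h2 : (factorAt w i n).count 2 = 0 :=
    List.count_eq_zero.2 fun h2 => by simpa using hzero 2 h2
  simp [balance, h1, h2]

def IsConcatBlocks0012 (w : ℕ → ℕ) : Prop :=
  ∀ k, factorAt w (2 * k) 2 = [0, 0] ∨ factorAt w (2 * k) 2 = [1, 2]

namespace IsConcatBlocks0012

variable {w : ℕ → ℕ} (hw : IsConcatBlocks0012 w)
include hw

lemma le_two (n : ℕ) : w n ≤ 2 := by
  obtain ⟨k, rfl | rfl⟩ := Nat.even_or_odd' n <;>
  rcases hw k with h | h <;> simp_all [factorAt_two]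

lemma balance_prefix_even (k : ℕ) : balance (factorAt w 0 (2 * k)) = 0 := by
  induction k with
  | zero => rfl
  | succ k ih =>
    rw [Nat.mul_succ, factorAt_add, balance_append, ih, Nat.zero_add]
    rcases hw k with h | h <;> rw [h] <;> rfl

lemma balance_prefix_mem (n : ℕ) :
    0 ≤ balance (factorAt w 0 n) ∧ balance (factorAt w 0 n) ≤ 1 := by
  obtain ⟨k, rfl | rfl⟩ := Nat.even_or_odd' n
  · simp [hw.balance_prefix_even]
  · rw [factorAt_add, balance_append, hw.balance_prefix_even, Nat.zero_add, factorAt_one,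
      balance_singleton]
    rcases hw k with h | h <;> simp_all [factorAt_two]

lemma natAbs_balance_factorAt_le_one (i n : ℕ) : (balance (factorAt w i n)).natAbs ≤ 1 := by
  have hsplit := congrArg balance (factorAt_add w 0 i n)
  rw [balance_append, Nat.zero_add] at hsplit
  have := hw.balance_prefix_mem i
  have := hw.balance_prefix_mem (i + n)
  omega

end IsConcatBlocks0012

lemma ne_of_natAbs_balance_le_one {w : ℕ → ℕ} (hle : ∀ n, w n ≤ 2)
    (hbal : ∀ i n, (balance (factorAt w i n)).natAbs ≤ 1) {i j : ℕ} (hij : i < j)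
    (hj : w j ≠ 0) (hzero : ∀ k, i < k → k < j → w k = 0) : w i ≠ w j := by
  intro heq
  have hmid : balance (factorAt w (i + 1) (j - i - 1)) = 0 :=
    balance_factorAt_of_forall_eq_zero fun k hk => hzero _ (by omega) (by omega)
  have hsplit : factorAt w i (1 + (j - i - 1) + 1) =
      [w i] ++ factorAt w (i + 1) (j - i - 1) ++ [w j] := by
    rw [factorAt_add, factorAt_add, factorAt_one, factorAt_one]
    congr 3; omega
  have hwi := hle i
  have hfactor := hbal i (1 + (j - i - 1) + 1)
  rw [hsplit, balance_append, balance_append, hmid, ← heq, balance_singleton] at hfactor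
  split_ifs at hfactor <;> omega

lemma pd_two_mul (k : ℕ) : pd (2 * k) = 0 := by
  rw [pd, Nat.factorization_eq_zero_of_not_dvd (by omega)]

lemma xw_isConcatBlocks0012 : IsConcatBlocks0012 xw := by
  intro k
  have hodd : pd (2 * k + 1) < 2 := Nat.mod_lt _ two_pos
  have hnext : pd (2 * k + 1 + 1) = 0 := pd_two_mul (k + 1)
  rw [factorAt_two, xw, xw, pd_two_mul, hnext]
  interval_cases pd (2 * k + 1) <;> simp

theorem stmt7 :
    (∀ w : List ℕ, IsFactor xw w → ((w.count 1 : ℤ) - (w.count 2 : ℤ)).natAbs ≤ 1) ∧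
    (∀ i j : ℕ, i < j → xw i ≠ 0 → xw j ≠ 0 →
      (∀ k, i < k → k < j → xw k = 0) → xw i ≠ xw j) := by
  have hbal := xw_isConcatBlocks0012.natAbs_balance_factorAt_le_one
  refine ⟨fun w ⟨i, hw⟩ => ?_, fun i j hij _ hj hzero =>
    ne_of_natAbs_balance_le_one xw_isConcatBlocks0012.le_two hbal hij hj hzero⟩
  rw [hw]
  exact hbal i w.length
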